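/- Let d ≥ 2 be an integer, let n_y > 0 be real, and let n_Z be a d×d real symmetric positive definite matrix; set n := (0, n_y, n_Z) ∈ E and F_∞ := {(x, 0, 0) ∈ E : x ≤ 0} (which equals K_logdet ∩ {n}^⊥). Then for every η > 0 there exists κ > 0 such that for every q ∈ E with ⟨q, n⟩ = 0 and ‖q‖ ≤ η one has dist(q, F_∞) ≤ κ · dist(q, K_logdet), i.e. a Lipschitz error bound holds. -/

import Mathlib

open Matrix Filter

noncomputable section

/-- The space `E = ℝ × ℝ × S^d` (matrix parts are required to be symmetric where relevant). -/
abbrev E (d : ℕ) : Type := ℝ × ℝ × Matrix (Fin d) (Fin d) ℝ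

/-- The inner product `⟨(x,y,Z),(x',y',Z')⟩ = x x' + y y' + tr (Z Z')` on `E`. -/
def ip {d : ℕ} (p q : E d) : ℝ := p.1 * q.1 + p.2.1 * q.2.1 + (p.2.2 * q.2.2).trace

/-- The induced norm `‖(x,y,Z)‖ = sqrt (x² + y² + tr (Z²))` on `E`. -/
def nrm {d : ℕ} (p : E d) : ℝ := Real.sqrt (p.1 ^ 2 + p.2.1 ^ 2 + (p.2.2 * p.2.2).trace)

/-- Distance from a point to a set: `dist(p, S) = inf {‖p - s‖ : s ∈ S}`. -/
def sdist {d : ℕ} (p : E d) (S : Set (E d)) : ℝ := sInf {r : ℝ | ∃ s ∈ S, r = nrm (p - s)}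

/-- The log-determinant cone `K_logdet`. -/
def Klogdet (d : ℕ) : Set (E d) :=
  {p | (0 < p.2.1 ∧ p.2.2.PosDef ∧ p.1 ≤ p.2.1 * Real.log ((p.2.1⁻¹ • p.2.2).det))
    ∨ (p.1 ≤ 0 ∧ p.2.1 = 0 ∧ p.2.2.PosSemidef)}

/-! Pick `r > 0` with `n_Z ⪰ r I` and let `s = (a, b, W) ∈ K_logdet` be at distance `δ` from
`q = (x, y, Z) ⊥ n`. Since `log det M ≤ tr M - d`, every point of the cone has `a ≤ tr W`.
Orthogonality and Cauchy–Schwarz give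
`r tr W ≤ tr (W n_Z) = tr ((W - Z) n_Z) - y n_y ≤ ‖n_Z‖ δ + (δ - b) n_y`, so `tr W = O(δ)`;
then so are `y n_y`, `x ≤ a + δ` and `‖Z‖ ≤ δ + ‖W‖ ≤ δ + tr W`. These bound the distance
from `q` to its projection `(min x 0, 0, 0)` onto `F_∞` by `O(δ)`. -/

open scoped Matrix.Norms.Frobenius MatrixOrder

namespace Matrix

variable {m n : Type*} [Fintype m] [Fintype n]

theorem frobenius_norm_sq_eq_sum (A : Matrix m n ℝ) : ‖A‖ ^ 2 = ∑ i, ∑ j, A i j ^ 2 := by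
  rw [frobenius_norm_def, ← Real.sqrt_eq_rpow, Real.sq_sqrt (by positivity)]
  simp

theorem trace_transpose_mul_self (A : Matrix m n ℝ) : (Aᵀ * A).trace = ‖A‖ ^ 2 := by
  rw [frobenius_norm_sq_eq_sum, Finset.sum_comm]
  simp [trace, mul_apply, sq]

theorem trace_mul_le_frobenius_norm_mul (A : Matrix m n ℝ) (B : Matrix n m ℝ) :
    (A * B).trace ≤ ‖A‖ * ‖B‖ := by
  have h := Real.sum_mul_le_sqrt_mul_sqrt (Finset.univ : Finset (m × n))
    (fun p => A p.1 p.2) (fun p => B p.2 p.1)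
  rw [← Real.sqrt_sq (norm_nonneg A), ← Real.sqrt_sq (norm_nonneg B), frobenius_norm_sq_eq_sum,
    frobenius_norm_sq_eq_sum, Finset.sum_comm (f := fun i j => B i j ^ 2)]
  simpa [trace, mul_apply, ← Finset.sum_product'] using h

theorem PosSemidef.exists_eq_transpose_mul_self {A : Matrix n n ℝ} (hA : A.PosSemidef) :
    ∃ B : Matrix n n ℝ, A = Bᵀ * B := by
  classical
  obtain ⟨B, hB⟩ := CStarAlgebra.nonneg_iff_eq_star_mul_self.mp hA.nonneg
  exact ⟨B, by rw [hB, star_eq_conjTranspose, conjTranspose_eq_transpose_of_trivial]⟩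

theorem PosSemidef.frobenius_norm_le_trace {A : Matrix n n ℝ} (hA : A.PosSemidef) :
    ‖A‖ ≤ A.trace := by
  obtain ⟨B, rfl⟩ := hA.exists_eq_transpose_mul_self
  calc ‖Bᵀ * B‖ ≤ ‖Bᵀ‖ * ‖B‖ := frobenius_norm_mul _ _
    _ = (Bᵀ * B).trace := by rw [frobenius_norm_transpose, trace_transpose_mul_self, sq]

theorem PosSemidef.trace_mul_nonneg {A B : Matrix n n ℝ} (hA : A.PosSemidef)
    (hB : B.PosSemidef) : 0 ≤ (A * B).trace := by
  obtain ⟨C, rfl⟩ := hA.exists_eq_transpose_mul_self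
  rw [Matrix.mul_assoc, trace_mul_comm]
  simpa using (hB.mul_mul_conjTranspose_same C).trace_nonneg

theorem PosSemidef.mul_trace_le_trace_mul [DecidableEq n] {A W : Matrix n n ℝ} {r : ℝ}
    (hA : (A - r • 1).PosSemidef) (hW : W.PosSemidef) : r * W.trace ≤ (W * A).trace := by
  have h := hW.trace_mul_nonneg hA
  rw [Matrix.mul_sub, trace_sub, Matrix.mul_smul, Matrix.mul_one, trace_smul, smul_eq_mul] at h
  linarith

theorem PosDef.exists_pos_posSemidef_sub_smul_one [DecidableEq n] {A : Matrix n n ℝ}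
    (hA : A.PosDef) : ∃ r : ℝ, 0 < r ∧ (A - r • 1).PosSemidef := by
  cases isEmpty_or_nonempty n
  · exact ⟨1, one_pos, by rw [Subsingleton.elim (A - (1 : ℝ) • 1) 0]; exact .zero⟩
  obtain ⟨r, hr, hle⟩ := (CFC.exists_pos_algebraMap_le_iff hA.isHermitian.isSelfAdjoint).2
    fun x hx => hA.isStrictlyPositive.spectrum_pos hx
  exact ⟨r, hr, by simpa [Algebra.algebraMap_eq_smul_one, le_iff] using hle⟩

theorem PosDef.log_det_le_trace_sub_card [DecidableEq n] {A : Matrix n n ℝ} (hA : A.PosDef) :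
    Real.log A.det ≤ A.trace - Fintype.card n := by
  rw [hA.isHermitian.det_eq_prod_eigenvalues, hA.isHermitian.trace_eq_sum_eigenvalues]
  simp only [RCLike.ofReal_real_eq_id, id_eq]
  rw [Real.log_prod fun i _ => (hA.eigenvalues_pos i).ne', ← Finset.card_univ,
    ← nsmul_one, ← Finset.sum_const, ← Finset.sum_sub_distrib]
  exact Finset.sum_le_sum fun i _ => Real.log_le_sub_one_of_pos (hA.eigenvalues_pos i)

end Matrix

variable {d : ℕ}

section Norm

variable {x y : ℝ} {Z : Matrix (Fin d) (Fin d) ℝ}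

theorem nrm_eq_of_isSymm (hZ : Z.IsSymm) : nrm ((x, y, Z) : E d) = √(x ^ 2 + y ^ 2 + ‖Z‖ ^ 2) := by
  rw [nrm, ← trace_transpose_mul_self, hZ.eq]

theorem nrm_le_of_isSymm (hZ : Z.IsSymm) : nrm ((x, y, Z) : E d) ≤ |x| + |y| + ‖Z‖ := by
  rw [nrm_eq_of_isSymm hZ]
  refine Real.sqrt_le_iff.mpr ⟨by positivity, ?_⟩
  nlinarith [abs_nonneg x, abs_nonneg y, norm_nonneg Z, sq_abs x, sq_abs y]

theorem abs_fst_le_nrm (hZ : Z.IsSymm) : |x| ≤ nrm ((x, y, Z) : E d) := by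
  rw [nrm_eq_of_isSymm hZ]
  exact Real.abs_le_sqrt (by linarith [sq_nonneg y, sq_nonneg ‖Z‖])

theorem abs_snd_le_nrm (hZ : Z.IsSymm) : |y| ≤ nrm ((x, y, Z) : E d) := by
  rw [nrm_eq_of_isSymm hZ]
  exact Real.abs_le_sqrt (by linarith [sq_nonneg x, sq_nonneg ‖Z‖])

theorem norm_le_nrm (hZ : Z.IsSymm) : ‖Z‖ ≤ nrm ((x, y, Z) : E d) := by
  rw [nrm_eq_of_isSymm hZ]
  exact Real.le_sqrt_of_sq_le (by linarith [sq_nonneg x, sq_nonneg y])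

end Norm

theorem sdist_le_nrm_sub {p s : E d} {S : Set (E d)} (hs : s ∈ S) : sdist p S ≤ nrm (p - s) :=
  csInf_le ⟨0, by rintro _ ⟨t, -, rfl⟩; exact Real.sqrt_nonneg _⟩ ⟨s, hs, rfl⟩

theorem le_mul_sdist {p : E d} {S : Set (E d)} {c κ : ℝ} (hκ : 0 < κ) (hS : S.Nonempty)
    (h : ∀ s ∈ S, c ≤ κ * nrm (p - s)) : c ≤ κ * sdist p S := by
  rw [← div_le_iff₀' hκ]
  obtain ⟨s, hs⟩ := hS
  refine le_csInf ⟨_, s, hs, rfl⟩ ?_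
  rintro _ ⟨t, ht, rfl⟩
  exact (div_le_iff₀' hκ).mpr (h t ht)

section Klogdet

variable {p : E d}

theorem zero_mem_Klogdet : (0 : E d) ∈ Klogdet d :=
  Or.inr ⟨le_rfl, rfl, .zero⟩

theorem posSemidef_of_mem_Klogdet (hp : p ∈ Klogdet d) : p.2.2.PosSemidef :=
  hp.elim (fun h => h.2.1.posSemidef) (fun h => h.2.2)

theorem snd_nonneg_of_mem_Klogdet (hp : p ∈ Klogdet d) : 0 ≤ p.2.1 :=
  hp.elim (fun h => h.1.le) (fun h => h.2.1.ge)

theorem fst_le_trace_of_mem_Klogdet (hp : p ∈ Klogdet d) : p.1 ≤ p.2.2.trace := by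
  obtain ⟨hb, hW, ha⟩ | ⟨ha, -, hW⟩ := hp
  · have hlog := (hW.smul (inv_pos.mpr hb)).log_det_le_trace_sub_card
    rw [trace_smul, smul_eq_mul, Fintype.card_fin] at hlog
    calc p.1 ≤ p.2.1 * (p.2.1⁻¹ * p.2.2.trace - d) := ha.trans (by gcongr)
      _ ≤ p.2.2.trace := by rw [mul_sub, ← mul_assoc, mul_inv_cancel₀ hb.ne']; nlinarith
  · exact ha.trans hW.trace_nonneg

end Klogdet

section ErrorBound

variable {ny r x y δ : ℝ} {nZ Z W : Matrix (Fin d) (Fin d) ℝ}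

theorem trace_mul_le_of_orthogonal (horth : y * ny + (Z * nZ).trace = 0) (hZW : ‖Z - W‖ ≤ δ) :
    (W * nZ).trace ≤ ‖nZ‖ * δ - y * ny := by
  have hCS := trace_mul_le_frobenius_norm_mul (W - Z) nZ
  rw [norm_sub_rev, Matrix.sub_mul, trace_sub] at hCS
  nlinarith [norm_nonneg nZ]

theorem nrm_sub_proj_le_of_mem_Klogdet (hr : 0 < r) (hnZ : (nZ - r • 1).PosSemidef)
    (hny : 0 < ny) (hZ : Z.IsSymm) (horth : y * ny + (Z * nZ).trace = 0) {s : E d}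
    (hs : s ∈ Klogdet d) :
    nrm (((x, y, Z) : E d) - (min x 0, 0, 0))
      ≤ 3 * (1 + (‖nZ‖ + ny) / r + ‖nZ‖ / ny) * nrm ((x, y, Z) - s) := by
  obtain ⟨a, b, W⟩ := s
  have hW : W.PosSemidef := posSemidef_of_mem_Klogdet hs
  have hb : 0 ≤ b := snd_nonneg_of_mem_Klogdet hs
  have ha : a ≤ W.trace := fst_le_trace_of_mem_Klogdet hs
  have hZW : (Z - W).IsSymm := hZ.sub (isHermitian_iff_isSymm.mp hW.isHermitian)
  set δ := nrm (((x, y, Z) : E d) - (a, b, W))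
  have hxa : |x - a| ≤ δ := abs_fst_le_nrm hZW
  have hyb : |y - b| ≤ δ := abs_snd_le_nrm hZW
  have hZWδ : ‖Z - W‖ ≤ δ := norm_le_nrm hZW
  have hδ : 0 ≤ δ := (abs_nonneg _).trans hxa
  have htrace := trace_mul_le_of_orthogonal horth hZWδ
  have hrW := hnZ.mul_trace_le_trace_mul hW
  have htrW : W.trace ≤ (‖nZ‖ + ny) / r * δ := by
    rw [div_mul_eq_mul_div, le_div_iff₀' hr]
    nlinarith [abs_le.mp hyb]
  have hyny : y ≤ ‖nZ‖ / ny * δ := by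
    rw [div_mul_eq_mul_div, le_div_iff₀ hny]
    nlinarith [hW.trace_nonneg]
  have hZnorm : ‖Z‖ ≤ δ + W.trace :=
    (norm_le_norm_add_norm_sub' Z W).trans (by linarith [hW.frobenius_norm_le_trace])
  have hA : 0 ≤ (‖nZ‖ + ny) / r * δ := by positivity
  have hB : 0 ≤ ‖nZ‖ / ny * δ := by positivity
  have hx : max x 0 ≤ (1 + (‖nZ‖ + ny) / r) * δ :=
    max_le (by linarith [abs_le.mp hxa]) (by positivity)
  have hy : |y| ≤ (1 + ‖nZ‖ / ny) * δ := abs_le.mpr ⟨by linarith [abs_le.mp hyb], by linarith⟩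
  have hproj : ((x, y, Z) : E d) - (min x 0, 0, 0) = (max x 0, y, Z) :=
    Prod.ext (show x - min x 0 = max x 0 by linarith [min_add_max x 0])
      (Prod.ext (sub_zero y) (sub_zero Z))
  calc nrm (((x, y, Z) : E d) - (min x 0, 0, 0)) ≤ |max x 0| + |y| + ‖Z‖ := by
        rw [hproj]; exact nrm_le_of_isSymm hZ
    _ ≤ 3 * (1 + (‖nZ‖ + ny) / r + ‖nZ‖ / ny) * δ := by
        rw [abs_of_nonneg (le_max_right x 0)]
        linarith

end ErrorBound

theorem stmt_16_general (d : ℕ) (ny : ℝ) (hny : 0 < ny)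
    (nZ : Matrix (Fin d) (Fin d) ℝ) (hnZ : nZ.PosDef) :
    ∀ η : ℝ, 0 < η → ∃ κ : ℝ, 0 < κ ∧ ∀ q : E d, q.2.2.IsSymm →
      ip q (0, ny, nZ) = 0 → nrm q ≤ η →
      sdist q {p : E d | p.1 ≤ 0 ∧ p.2.1 = 0 ∧ p.2.2 = 0}
        ≤ κ * sdist q (Klogdet d) := by
  intro η _
  obtain ⟨r, hr, hnZr⟩ := hnZ.exists_pos_posSemidef_sub_smul_one
  refine ⟨3 * (1 + (‖nZ‖ + ny) / r + ‖nZ‖ / ny), by positivity, ?_⟩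
  rintro ⟨x, y, Z⟩ hZ horth -
  have horth' : y * ny + (Z * nZ).trace = 0 := by simpa [ip] using horth
  exact le_trans (sdist_le_nrm_sub ⟨min_le_right x 0, rfl, rfl⟩)
    (le_mul_sdist (by positivity) ⟨0, zero_mem_Klogdet⟩ fun _ hs =>
      nrm_sub_proj_le_of_mem_Klogdet hr hnZr hny hZ horth' hs)

/-- Theorem 3.4 (Lipschitz error bound concerning `F_∞` when `n_y > 0`): for
`n = (0, n_y, n_Z)` with `n_y > 0`, `n_Z ≻ 0`, and any `η > 0` there is `κ > 0` with
`dist(q, F_∞) ≤ κ dist(q, K_logdet)` for all `q ∈ {n}^⊥` with `‖q‖ ≤ η`. -/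
theorem stmt_16 (d : ℕ) (hd : 2 ≤ d) (ny : ℝ) (hny : 0 < ny)
    (nZ : Matrix (Fin d) (Fin d) ℝ) (hnZ : nZ.PosDef) :
    ∀ η : ℝ, 0 < η → ∃ κ : ℝ, 0 < κ ∧ ∀ q : E d, q.2.2.IsSymm →
      ip q (0, ny, nZ) = 0 → nrm q ≤ η →
      sdist q {p : E d | p.1 ≤ 0 ∧ p.2.1 = 0 ∧ p.2.2 = 0}
        ≤ κ * sdist q (Klogdet d) :=
  stmt_16_general d ny hny nZ hnZ
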